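/- Let G be the complete multipartite graph K_{2,3,3,...,3} with one part of size 2 and t − 1 ≥ 1 parts of size 3. Then the Roman bondage number of G equals 2. -/

import Mathlib

/-!
Let `{a, b}` be the part of size two. Putting `2` on `a` and `1` on `b` gives `γ_R = 3`, and since
`ab` is not an edge, after deleting a single edge one of `a`, `b` is still adjacent to every other
part, so `γ_R` stays `3`. Deleting the two edges from `a` and `b` to a common vertex `x` leaves
every vertex with two non-neighbours; then a Roman dominating function of weight at most `3`
would have to put `2` on some vertex and be positive on its two non-neighbours, so `γ_R` becomes
`4`.
-/

open SimpleGraph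

/-- The Roman domination number: the minimum weight of a Roman dominating function,
i.e. a function `f : V → ℕ` with values in `{0,1,2}` such that every vertex with
value `0` has a neighbor with value `2`. -/
noncomputable def romanDominationNumber {V : Type*} [Fintype V] (G : SimpleGraph V) : ℕ :=
  sInf {w | ∃ f : V → ℕ, (∀ v, f v ≤ 2) ∧
    (∀ v, f v = 0 → ∃ u, G.Adj v u ∧ f u = 2) ∧ w = ∑ v, f v}

/-- The Roman bondage number: the minimum cardinality of a set `B` of edges of `G`
whose removal increases the Roman domination number. -/
noncomputable def romanBondageNumber {V : Type*} [Fintype V] (G : SimpleGraph V) : ℕ :=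
  sInf {k | ∃ B : Finset (Sym2 V), ↑B ⊆ G.edgeSet ∧ B.card = k ∧
    romanDominationNumber G < romanDominationNumber (G.deleteEdges ↑B)}

open Finset

section RomanDomination

variable {V : Type*} {G : SimpleGraph V}

def IsRomanDominating (G : SimpleGraph V) (f : V → ℕ) : Prop :=
  (∀ v, f v ≤ 2) ∧ ∀ v, f v = 0 → ∃ u, G.Adj v u ∧ f u = 2

variable [Fintype V]

lemma romanDominationNumber_le {f : V → ℕ} (hf : IsRomanDominating G f) :
    romanDominationNumber G ≤ ∑ v, f v :=
  Nat.sInf_le ⟨f, hf.1, hf.2, rfl⟩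

lemma le_romanDominationNumber {n : ℕ} (h : ∀ f, IsRomanDominating G f → n ≤ ∑ v, f v) :
    n ≤ romanDominationNumber G :=
  le_csInf ⟨_, fun _ => 2, fun _ => le_rfl, fun v h => by simp at h, rfl⟩
    (by rintro _ ⟨f, h1, h2, rfl⟩; exact h f ⟨h1, h2⟩)

/-- If every vertex has `k ≤ 2` non-neighbours, a Roman dominating function either takes the
value `2` twice, or takes it once and is positive on the non-neighbours of that vertex, or is
positive everywhere. -/
theorem IsRomanDominating.le_sum {k : ℕ} (hk : k ≤ 2) (hcard : k + 2 ≤ Fintype.card V)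
    (hnon : ∀ v, ∃ s : Finset V, #s = k ∧ v ∉ s ∧ ∀ w ∈ s, ¬ G.Adj v w)
    {f : V → ℕ} (hf : IsRomanDominating G f) : k + 2 ≤ ∑ v, f v := by
  classical
  by_cases h2 : ∃ v, f v = 2
  · obtain ⟨v, hv⟩ := h2
    obtain ⟨s, hs, hvs, hnadj⟩ := hnon v
    by_cases h0 : ∃ w ∈ s, f w = 0
    · obtain ⟨w, hws, hw⟩ := h0
      obtain ⟨u, hwu, hu⟩ := hf.2 w hw
      have huv : u ≠ v := by rintro rfl; exact hnadj w hws hwu.symm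
      calc k + 2 ≤ f v + f u := by omega
        _ = ∑ x ∈ {v, u}, f x := (sum_pair huv.symm).symm
        _ ≤ ∑ x, f x := sum_le_sum_of_subset (subset_univ _)
    · push Not at h0
      calc k + 2 = f v + ∑ _w ∈ s, 1 := by simp [hs, hv, add_comm]
        _ ≤ f v + ∑ w ∈ s, f w := by
          gcongr with w hw
          exact Nat.one_le_iff_ne_zero.2 (h0 w hw)
        _ = ∑ x ∈ insert v s, f x := (sum_insert hvs).symm
        _ ≤ ∑ x, f x := sum_le_sum_of_subset (subset_univ _)
  · push Not at h2
    have hpos : ∀ v, 1 ≤ f v := fun v => Nat.one_le_iff_ne_zero.2 fun h0 => by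
      obtain ⟨u, -, hu⟩ := hf.2 v h0
      exact h2 u hu
    calc k + 2 ≤ Fintype.card V := hcard
      _ = ∑ _v : V, 1 := by simp
      _ ≤ ∑ v, f v := sum_le_sum fun v _ => hpos v

theorem romanDominationNumber_le_three {c d : V} (hcd : c ≠ d)
    (hadj : ∀ v, v ≠ c → v ≠ d → G.Adj v c) : romanDominationNumber G ≤ 3 := by
  classical
  let f : V → ℕ := fun v => if v = c then 2 else if v = d then 1 else 0
  have hf : IsRomanDominating G f := by
    refine ⟨fun v => by simp only [f]; split_ifs <;> omega,
      fun v hv => ⟨c, ?_, by simp [f]⟩⟩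
    exact hadj v (by rintro rfl; simp [f] at hv) (by rintro rfl; simp [f, hcd.symm] at hv)
  calc romanDominationNumber G ≤ ∑ v, f v := romanDominationNumber_le hf
    _ = f c + f d := Fintype.sum_eq_add c d hcd fun v hv => by simp [f, hv.1, hv.2]
    _ = 3 := by simp [f, hcd.symm]

theorem romanDominationNumber_deleteEdges_le_three {a b : V} (hab : a ≠ b) (hnab : ¬ G.Adj a b)
    (hadj : ∀ v, v ≠ a → v ≠ b → G.Adj v a ∧ G.Adj v b)
    {B : Finset (Sym2 V)} (hB : ↑B ⊆ G.edgeSet) (hB1 : #B ≤ 1) :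
    romanDominationNumber (G.deleteEdges ↑B) ≤ 3 := by
  wlog ha : ∀ e ∈ B, a ∉ e generalizing a b
  · push Not at ha
    obtain ⟨e, he, hae⟩ := ha
    refine this hab.symm (fun h => hnab h.symm) (fun v hb ha => (hadj v ha hb).symm)
      fun e' he' hbe' => hnab ?_
    rw [card_le_one.1 hB1 e' he' e he] at hbe'
    rw [← mem_edgeSet, ← (Sym2.mem_and_mem_iff hab).1 ⟨hae, hbe'⟩]
    exact hB he
  refine romanDominationNumber_le_three hab fun v hva hvb => ?_
  rw [deleteEdges_adj]
  exact ⟨(hadj v hva hvb).1, fun hv => ha _ hv (Sym2.mem_mk_right v a)⟩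

theorem romanBondageNumber_eq {k : ℕ} {B : Finset (Sym2 V)} (hB : ↑B ⊆ G.edgeSet)
    (hBk : #B = k)
    (hlt : romanDominationNumber G < romanDominationNumber (G.deleteEdges ↑B))
    (hmin : ∀ B : Finset (Sym2 V), ↑B ⊆ G.edgeSet → #B < k →
      romanDominationNumber (G.deleteEdges ↑B) ≤ romanDominationNumber G) :
    romanBondageNumber G = k := by
  refine le_antisymm (Nat.sInf_le ⟨B, hB, hBk, hlt⟩) (le_csInf ⟨k, B, hB, hBk, hlt⟩ ?_)
  rintro m ⟨B', hB', rfl, hlt'⟩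
  by_contra! hm
  exact (hmin B' hB' hm).not_gt hlt'

end RomanDomination

section CompleteMultipartite

variable {ι : Type*} {V : ι → Type*}

lemma exists_finset_not_adj_completeMultipartiteGraph [∀ i, Fintype (V i)] (v : Σ i, V i)
    {k : ℕ} (hk : k < Fintype.card (V v.1)) :
    ∃ s : Finset (Σ i, V i), #s = k ∧ v ∉ s ∧
      ∀ w ∈ s, ¬ (completeMultipartiteGraph V).Adj v w := by
  classical
  obtain ⟨i, x⟩ := v
  obtain ⟨t, ht, htk⟩ := exists_subset_card_eq (s := univ.erase x) (n := k)
    (by rw [card_erase_of_mem (mem_univ _), card_univ]; exact Nat.le_sub_one_of_lt hk)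
  refine ⟨t.map (.sigmaMk i), by rw [card_map, htk], ?_, ?_⟩
  · simp only [mem_map, Function.Embedding.sigmaMk_apply, not_exists, not_and]
    intro y hy hyv
    exact (mem_erase.1 (ht hy)).1 (sigma_mk_injective hyv)
  · simp

variable {i₀ j : ι} {a b : V i₀}

lemma fst_ne_of_ne_of_ne (hV₀ : ∀ y, y = a ∨ y = b) {v : Σ i, V i} (ha : v ≠ ⟨i₀, a⟩)
    (hb : v ≠ ⟨i₀, b⟩) : v.1 ≠ i₀ := by
  obtain ⟨i, y⟩ := v
  rintro rfl
  rcases hV₀ y with rfl | rfl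
  exacts [ha rfl, hb rfl]

variable [∀ i, Fintype (V i)]

lemma two_le_card_of_ne (hab : a ≠ b) (hV : ∀ i ≠ i₀, 3 ≤ Fintype.card (V i)) (i : ι) :
    2 ≤ Fintype.card (V i) := by
  by_cases hi : i = i₀
  · subst hi
    exact Fintype.one_lt_card_iff.2 ⟨a, b, hab⟩
  · exact (hV i hi).trans' (by norm_num)

variable [Fintype ι]

lemma card_add_card_le_card_sigma {i j : ι} (hij : i ≠ j) :
    Fintype.card (V i) + Fintype.card (V j) ≤ Fintype.card (Σ i, V i) := by
  classical
  rw [Fintype.card_sigma]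
  calc _ = ∑ k ∈ {i, j}, Fintype.card (V k) := by rw [sum_pair hij]
    _ ≤ _ := sum_le_sum_of_subset (subset_univ _)

theorem romanDominationNumber_completeMultipartiteGraph (hj : j ≠ i₀) (hab : a ≠ b)
    (hV₀ : ∀ y, y = a ∨ y = b) (hV : ∀ i ≠ i₀, 3 ≤ Fintype.card (V i)) :
    romanDominationNumber (completeMultipartiteGraph V) = 3 := by
  have hV₂ := two_le_card_of_ne hab hV
  refine le_antisymm ?_ (le_romanDominationNumber fun f hf =>
    hf.le_sum (k := 1) (by norm_num) ?_ fun v => ?_)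
  · exact romanDominationNumber_le_three (fun h => hab (sigma_mk_injective h))
      fun v ha hb => fst_ne_of_ne_of_ne hV₀ ha hb
  · have := card_add_card_le_card_sigma (V := V) hj
    have := hV j hj
    omega
  · exact exists_finset_not_adj_completeMultipartiteGraph v (hV₂ v.1)

theorem four_le_romanDominationNumber_deleteEdges (hj : j ≠ i₀) (hab : a ≠ b)
    (hV₀ : ∀ y, y = a ∨ y = b) (hV : ∀ i ≠ i₀, 3 ≤ Fintype.card (V i)) (x : V j) :
    4 ≤ romanDominationNumber ((completeMultipartiteGraph V).deleteEdges
      {s((⟨i₀, a⟩ : Σ i, V i), ⟨j, x⟩), s(⟨i₀, b⟩, ⟨j, x⟩)}) := by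
  classical
  refine le_romanDominationNumber fun f hf => hf.le_sum le_rfl ?_ fun v => ?_
  · have := card_add_card_le_card_sigma (V := V) hj
    have := two_le_card_of_ne hab hV j
    have := two_le_card_of_ne hab hV i₀
    omega
  by_cases hv : v.1 = i₀
  · have hax : (⟨i₀, a⟩ : Σ i, V i) ≠ ⟨j, x⟩ := fun h => hj (congrArg (·.1) h).symm
    have hbx : (⟨i₀, b⟩ : Σ i, V i) ≠ ⟨j, x⟩ := fun h => hj (congrArg (·.1) h).symm
    obtain rfl | rfl : v = ⟨i₀, a⟩ ∨ v = ⟨i₀, b⟩ := by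
      by_contra! h
      exact fst_ne_of_ne_of_ne hV₀ h.1 h.2 hv
    · refine ⟨{⟨i₀, b⟩, ⟨j, x⟩}, card_pair hbx, by simp [hab, hax], ?_⟩
      simp [deleteEdges_adj]
    · refine ⟨{⟨i₀, a⟩, ⟨j, x⟩}, card_pair hax, by simp [hab.symm, hbx], ?_⟩
      simp [deleteEdges_adj]
  · obtain ⟨s, hs, hvs, hnadj⟩ := exists_finset_not_adj_completeMultipartiteGraph v (hV v.1 hv)
    exact ⟨s, hs, hvs, fun w hw h => hnadj w hw (deleteEdges_le _ h)⟩

theorem romanBondageNumber_completeMultipartiteGraph (hj : j ≠ i₀)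
    (h₀ : Fintype.card (V i₀) = 2) (hV : ∀ i ≠ i₀, 3 ≤ Fintype.card (V i)) :
    romanBondageNumber (completeMultipartiteGraph V) = 2 := by
  classical
  obtain ⟨a, b, hab, hV₀⟩ : ∃ a b : V i₀, a ≠ b ∧ ∀ y, y = a ∨ y = b := by
    rw [← Nat.card_eq_fintype_card, Nat.card_eq_two_iff] at h₀
    obtain ⟨a, b, hab, huniv⟩ := h₀
    exact ⟨a, b, hab, fun y => by simpa using huniv.ge (Set.mem_univ y)⟩
  obtain ⟨x⟩ : Nonempty (V j) := Fintype.card_pos_iff.1 (by have := hV j hj; omega)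
  have hγ := romanDominationNumber_completeMultipartiteGraph hj hab hV₀ hV
  have hD : ↑({s((⟨i₀, a⟩ : Σ i, V i), ⟨j, x⟩), s(⟨i₀, b⟩, ⟨j, x⟩)} :
      Finset (Sym2 (Σ i, V i))) ⊆ (completeMultipartiteGraph V).edgeSet := by
    simp [Set.insert_subset_iff, hj.symm]
  refine romanBondageNumber_eq hD (card_pair (by simp [hab, hj.symm])) ?_ fun E hE hE1 => ?_
  · have := four_le_romanDominationNumber_deleteEdges hj hab hV₀ hV x
    rw [coe_pair]
    omega
  · rw [hγ]
    refine romanDominationNumber_deleteEdges_le_three (fun h => hab (sigma_mk_injective h))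
      (fun h : (completeMultipartiteGraph V).Adj _ _ => h rfl) (fun v ha hb => ?_) hE (by omega)
    exact ⟨fst_ne_of_ne_of_ne hV₀ ha hb, fst_ne_of_ne_of_ne hV₀ ha hb⟩

end CompleteMultipartite

/-- The complete multipartite graph `K_{2,3,…,3}` with one part of size `2` and
`t - 1 ≥ 1` parts of size `3` has Roman bondage number `2`. -/
theorem roman_bondage_K233
    (t : ℕ) (ht : 2 ≤ t) :
    romanBondageNumber
      (completeMultipartiteGraph
        (fun j : Fin t => Fin (if (j : ℕ) = 0 then 2 else 3))) = 2 :=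
  romanBondageNumber_completeMultipartiteGraph (i₀ := ⟨0, by omega⟩) (j := ⟨1, by omega⟩)
    (by simp [Fin.ext_iff]) (by simp) fun i hi => by
      rw [Ne, Fin.ext_iff] at hi
      simp [hi]
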